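/- arXiv:2310.13076 — 4 statements merged into one kernel-verified Lean document; each statement's English description precedes it below -/
import Mathlib

section
/- Let a 1-D model have receptive field size r and effective stride s (s ≥ 1), so that the feature at index i depends exactly on input pixels in the window [i·s, i·s + r - 1]. If a patch occupies a contiguous window of p input pixels (p ≥ 1), then the number of feature indices whose receptive window intersects the patch is at most ⌈(p + r - 1)/s⌉. -/
/-- **Corrupted-feature bound (Equation 2).**
Feature `i` of a 1-D SRF model has receptive window `[i*s, i*s + r - 1]`
(represented as `Set.Ico (i*s) (i*s + r)`); a patch at position `a` occupies
pixels `[a, a + p - 1]` (`Set.Ico a (a + p)`). The number of features whose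
receptive window intersects the patch is at most `⌈(p + r - 1)/s⌉`, written
with natural-number ceiling division as `(p + r - 1 + s - 1) / s`. -/
theorem corrupted_features_bound (r s p a : ℕ)
    (hr : 1 ≤ r) (hs : 1 ≤ s) (hp : 1 ≤ p) :
    {i : ℕ | (Set.Ico (i * s) (i * s + r) ∩ Set.Ico a (a + p)).Nonempty}.ncard ≤
      (p + r - 1 + s - 1) / s := by
  set S := {i : ℕ | (Set.Ico (i * s) (i * s + r) ∩ Set.Ico a (a + p)).Nonempty} with hSdef
  rcases S.eq_empty_or_nonempty with h | h
  · simp [h]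
  set K := (p + r - 2) / s + 1 with hK
  set m := sInf S with hm
  have hmS : m ∈ S := Nat.sInf_mem h
  obtain ⟨y, hy1, hy2⟩ := hmS
  have h1 : a < m * s + r := lt_of_le_of_lt hy2.1 hy1.2
  have key : S ⊆ Set.Ico m (m + K) := by
    intro i hi
    obtain ⟨x, hx1, hx2⟩ := hi
    have h2 : i * s < a + p := lt_of_le_of_lt hx1.1 hx2.2
    have key2 : (i - m) * s ≤ p + r - 2 := by
      have hsm := Nat.sub_mul i m s
      set u := i * s
      set v := m * s
      set w := (i - m) * s
      omega
    have hdiv : i - m ≤ (p + r - 2) / s := (Nat.le_div_iff_mul_le hs).mpr key2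
    have hle : m ≤ i := Nat.sInf_le (by exact ⟨x, hx1, hx2⟩)
    exact ⟨hle, by omega⟩
  have hfin : (Set.Ico m (m + K)).Finite := Set.finite_Ico _ _
  have hcard : (Set.Ico m (m + K)).ncard = K := by
    rw [← Finset.coe_Ico, Set.ncard_coe_finset, Nat.card_Ico]
    exact Nat.add_sub_cancel_left m K
  have hle := Set.ncard_le_ncard key hfin
  rw [hcard] at hle
  refine hle.trans ?_
  have : p + r - 1 + s - 1 = p + r - 2 + s := by omega
  rw [this, Nat.add_div_right _ hs]
end

section
/- Let n, s ≥ 1, p ≥ 1, and set mask width m = p + s - 1 with m ≤ n. Then the mask set M_{m,s,n} is R-covering for patches of width p: for every patch position a with 0 ≤ a ≤ n - p, there exists a mask position i ∈ {0, s, 2s, ..., ⌊(n-m)/s⌋·s} ∪ {n-m} such that the interval [a, a+p) is contained in [i, i+m). -/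
/-- **R-covering of the 1-D mask set.**
With mask width `m = p + s - 1 ≤ n`, for every patch position `a ≤ n - p` there
is a mask position `i` in `{k*s : 0 ≤ k ≤ ⌊(n-m)/s⌋} ∪ {n-m}` such that the
patch interval `[a, a+p)` is contained in the mask interval `[i, i+m)`. -/
theorem mask_set_covering (n s p : ℕ) (hs : 1 ≤ s) (hp : 1 ≤ p)
    (hm : p + s - 1 ≤ n) :
    ∀ a : ℕ, a ≤ n - p →
      ∃ i ∈ (Finset.range ((n - (p + s - 1)) / s + 1)).image (fun k => k * s) ∪
          {n - (p + s - 1)},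
        Set.Ico a (a + p) ⊆ Set.Ico i (i + (p + s - 1)) := by
  intro a ha
  set m := p + s - 1 with hmdef
  have hpm : p ≤ m := by omega
  have hpn : p ≤ n := le_trans hpm hm
  have hapn : a + p ≤ n := by omega
  by_cases hk : a / s ≤ (n - m) / s
  · refine ⟨a / s * s, ?_, ?_⟩
    · apply Finset.mem_union_left
      exact Finset.mem_image_of_mem _ (Finset.mem_range.mpr (by omega))
    · intro x hx
      simp only [Set.mem_Ico] at hx ⊢
      have h1 : a / s * s ≤ a := Nat.div_mul_le_self a s
      have h2 : a < a / s * s + s := by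
        have h3 := Nat.mod_lt a (show 0 < s by omega)
        have h4 := Nat.div_add_mod a s
        have h5 : a / s * s = s * (a / s) := Nat.mul_comm _ _
        omega
      omega
  · refine ⟨n - m, Finset.mem_union_right _ (by simp), ?_⟩
    have hna : n - m ≤ a := by
      by_contra hcon
      exact hk (Nat.div_le_div_right (by omega))
    intro x hx
    simp only [Set.mem_Ico] at hx ⊢
    omega
end

section
/- If the double-masking inference returns in Case II with a disagreer label ŷ_dis obtained from mask m_dis, and all second-round predictions on f ⊙ m_dis are unanimous equal to ŷ_dis, and the mask set M is R-covering with the patch covered by some m* ∈ M, and all clean two-mask predictions equal y, then ŷ_dis = y. -/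
/-- **Case II of double-masking returns the correct label.**
Abstract setting: `app f m` applies mask `m` to feature map `f`. The
adversarial feature map `f'` satisfies `f' ⊙ m ⊙ m* = f ⊙ m ⊙ m*` for every
mask `m` (the patch is covered by `m* ∈ M`). If all clean two-mask predictions
equal `y`, and for the disagreer mask `m_dis ∈ M` all second-round predictions
on `f' ⊙ m_dis` are unanimous and equal the disagreer label
`ŷ_dis = M_lrf (f' ⊙ m_dis)`, then `ŷ_dis = y`. -/
theorem case_two_disagreer_label_correct
    {F Mask Y : Type*} (Mlrf : F → Y) (app : F → Mask → F)
    (M : Set Mask) (f f' : F) (y : Y)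
    (mstar : Mask) (hmstar : mstar ∈ M)
    (hagree : ∀ m : Mask, app (app f' m) mstar = app (app f m) mstar)
    (hclean : ∀ m₀ ∈ M, ∀ m₁ ∈ M, Mlrf (app (app f m₀) m₁) = y)
    (mdis : Mask) (hmdis : mdis ∈ M) (ydis : Y)
    (hydis : ydis = Mlrf (app f' mdis))
    (hunanimous : ∀ m ∈ M, Mlrf (app (app f' mdis) m) = ydis) :
    ydis = y := by
  have h := hunanimous mstar hmstar
  rw [hagree mdis, hclean mdis hmdis mstar hmstar] at h
  exact h.symm
end

section
/- Minority Reports (MR) detection soundness: suppose for every mask m ∈ M the clean single-mask prediction M_lrf(x ⊙ m) = y, and M is R-covering. Then for any adversarial x' ∈ A_R(x), the MR procedure (which returns the unanimous label if all single-mask predictions on x' agree, and alerts otherwise) either returns y or issues an attack alert; it never returns a wrong label. -/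
/-- **Minority Reports detection soundness.**
Images are `ι → ℝ`; a binary mask `m : ι → Bool` zeroes out pixels where it is
`false`. Suppose every clean single-mask prediction equals `y`, and the mask
set `M` is covering: some `m* ∈ M` covers the patch region `r` (where
`r i = false` marks patch pixels), so the adversarial `x'` agrees with `x`
wherever `r` is `true`. Then if the MR procedure returns a label `ℓ` (i.e. all
single-mask predictions on `x'` unanimously equal `ℓ`, no alert), `ℓ = y`:
MR never returns a wrong label. -/
theorem minority_reports_sound {ι Y : Type*}
    (Mlrf : (ι → ℝ) → Y) (M : Set (ι → Bool)) (x : ι → ℝ) (y : Y)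
    (maskApply : (ι → ℝ) → (ι → Bool) → (ι → ℝ))
    (hmaskApply : ∀ (z : ι → ℝ) (m : ι → Bool) (i : ι),
      maskApply z m i = if m i then z i else 0)
    (hclean : ∀ m ∈ M, Mlrf (maskApply x m) = y)
    (x' : ι → ℝ) (r : ι → Bool)
    (hx' : ∀ i, r i = true → x' i = x i)
    (mstar : ι → Bool) (hmstar : mstar ∈ M)
    (hcov : ∀ i, mstar i = true → r i = true) :
    ∀ ℓ : Y, (∀ m ∈ M, Mlrf (maskApply x' m) = ℓ) → ℓ = y := by
  intro l hl
  have key : maskApply x' mstar = maskApply x mstar := by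
    funext i
    rw [hmaskApply, hmaskApply]
    by_cases h : mstar i = true
    · simp [h, hx' i (hcov i h)]
    · simp [h]
  rw [← hl mstar hmstar, key, hclean mstar hmstar]
end
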